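/- arXiv:2203.01119 — 3 statements merged into one kernel-verified Lean document; each statement's English description precedes it below -/
import Mathlib

section
/- Let M be a monoid equipped with a linear order such that multiplication is strictly monotone on both sides and such that the identity 1 is the least element of M. Let A be a subset of M with 1 ∉ A that is well-ordered (the restriction of < to A is well-founded). Then the set C = { l.prod : l a nonempty finite list all of whose entries lie in A } is well-ordered (the restriction of < to C is well-founded), and moreover, for each t ∈ C there are only finitely many nonempty finite lists l with all entries in A such that l.prod = t. -/
/-!
Higman's lemma makes the lists over the partially well-ordered set `A` partially well-ordered
under the embedding `List.SublistForall₂ (· ≤ ·)`. Since `1` is least, a list's product can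
only grow along an embedding, so the products inherit well-foundedness; and since every
element of `A` exceeds `1`, it grows strictly along a proper embedding, so the lists with a
given product form an antichain, which is finite.
-/

namespace List

variable {M : Type*} [Monoid M]

theorem prod_le_prod_of_sublistForall₂ [Preorder M] [MulLeftMono M] [MulRightMono M]
    (hone : ∀ a : M, 1 ≤ a) {l₁ l₂ : List M} (h : SublistForall₂ (· ≤ ·) l₁ l₂) :
    l₁.prod ≤ l₂.prod := by
  induction h with
  | nil => exact one_le_prod_of_one_le fun a _ => hone a
  | cons hab _ ih => simpa only [prod_cons] using mul_le_mul' hab ih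
  | cons_right _ ih => simpa only [prod_cons] using le_mul_of_one_le_of_le (hone _) ih

theorem prod_lt_prod_of_sublistForall₂ [PartialOrder M] [MulLeftStrictMono M]
    [MulRightStrictMono M] (hone : ∀ a : M, 1 ≤ a) {l₁ l₂ : List M}
    (h : SublistForall₂ (· ≤ ·) l₁ l₂) (hne : l₁ ≠ l₂) (h₂ : (1 : M) ∉ l₂) :
    l₁.prod < l₂.prod := by
  have := mulLeftMono_of_mulLeftStrictMono M
  have := mulRightMono_of_mulRightStrictMono M
  have one_lt : ∀ {b l}, (1 : M) ∉ b :: l → 1 < b := fun h₂ =>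
    (hone _).lt_of_ne fun h1 => h₂ (h1 ▸ mem_cons_self ..)
  induction h with
  | nil =>
    obtain ⟨b, l, rfl⟩ := exists_cons_of_ne_nil hne.symm
    exact Left.one_lt_mul_of_lt_of_le (one_lt h₂) (one_le_prod_of_one_le fun a _ => hone a)
  | @cons a b l₁ l₂ hab h ih =>
    rw [prod_cons, prod_cons]
    rcases hab.lt_or_eq with hlt | rfl
    · exact mul_lt_mul_of_lt_of_le hlt (prod_le_prod_of_sublistForall₂ hone h)
    · exact mul_lt_mul_right (ih (by simpa using hne) fun h1 => h₂ (mem_cons_of_mem _ h1)) a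
  | @cons_right l₁ b l₂ h _ =>
    rw [prod_cons]
    exact (prod_le_prod_of_sublistForall₂ hone h).trans_lt
      (lt_mul_of_one_lt_left' _ (one_lt h₂))

end List

/-- Neumann's combinatorial lemma: if `A` is a well-ordered subset (for `<`) of a
linearly ordered monoid in which multiplication is strictly monotone on both sides
and `1` is the least element, and `1 ∉ A`, then the set of products of nonempty
finite lists with entries in `A` is well-ordered, and each such product has only
finitely many representing lists. -/
theorem neumann_combinatorial_lemma {M : Type*} [Monoid M] [LinearOrder M]
    (hmul_right : ∀ a b c : M, a < b → a * c < b * c)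
    (hmul_left : ∀ a b c : M, a < b → c * a < c * b)
    (hone : ∀ a : M, 1 ≤ a)
    (A : Set M) (hA1 : (1 : M) ∉ A) (hA : A.WellFoundedOn (· < ·)) :
    ({t : M | ∃ l : List M, l ≠ [] ∧ (∀ x ∈ l, x ∈ A) ∧ l.prod = t}.WellFoundedOn
        (· < ·)) ∧
    ∀ t ∈ {t : M | ∃ l : List M, l ≠ [] ∧ (∀ x ∈ l, x ∈ A) ∧ l.prod = t},
      {l : List M | l ≠ [] ∧ (∀ x ∈ l, x ∈ A) ∧ l.prod = t}.Finite := by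
  have : MulLeftStrictMono M := ⟨fun c _ _ h => hmul_left _ _ c h⟩
  have : MulRightStrictMono M := ⟨fun c _ _ h => hmul_right _ _ c h⟩
  have := mulLeftMono_of_mulLeftStrictMono M
  have := mulRightMono_of_mulRightStrictMono M
  have higman : {l : List M | ∀ x ∈ l, x ∈ A}.PartiallyWellOrderedOn
      (List.SublistForall₂ (· ≤ ·)) :=
    Set.PartiallyWellOrderedOn.partiallyWellOrderedOn_sublistForall₂ _
      (Set.isPWO_iff_isWF.mpr hA)
  refine ⟨?_, fun t _ => ?_⟩
  · have hsub : {t : M | ∃ l : List M, l ≠ [] ∧ (∀ x ∈ l, x ∈ A) ∧ l.prod = t} ⊆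
        List.prod '' {l | ∀ x ∈ l, x ∈ A} := fun _ ⟨l, _, hl, hprod⟩ => ⟨l, hl, hprod⟩
    exact Set.IsPWO.isWF ((higman.image_of_monotone_on fun _ _ _ _ h =>
      List.prod_le_prod_of_sublistForall₂ hone h).mono hsub)
  · refine IsAntichain.finite_of_partiallyWellOrderedOn ?_ (higman.mono fun l hl => hl.2.1)
    rintro l₁ ⟨-, -, rfl⟩ l₂ ⟨-, hl₂, hprod⟩ hne hemb
    refine (List.prod_lt_prod_of_sublistForall₂ hone hemb hne fun h1 => ?_).ne hprod.symm
    exact hA1 (hl₂ 1 h1)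
end

section
/- Let M be a monoid equipped with a linear order such that multiplication is strictly monotone on both sides and such that the identity 1 is the least element of M. Let A be a subset of M with 1 ∉ A that is well-ordered. Then there is no sequence of nonempty finite lists s₁, s₂, s₃, … , each with all entries in A, whose products satisfy s₁.prod > s₂.prod > s₃.prod > ⋯ ; equivalently, the set of all products of strings over A is well-ordered. -/
/-!
By Higman's lemma, the lists over a partially well-ordered set are partially well-ordered under
"pointwise `≤` to a sublist". Since every letter is at least `1`, deleting letters and lowering the
remaining ones both decrease the product, so the product map is monotone for that relation and its
image, the set of string products, is again partially well-ordered. In a linear order this means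
well-ordered.
-/

theorem Set.IsPWO.image_list_prod {M : Type*} [Monoid M] [Preorder M] [MulLeftMono M]
    [MulRightMono M] {A : Set M} (hA : A.IsPWO) (hone : ∀ a ∈ A, 1 ≤ a) :
    (List.prod '' {l : List M | ∀ x ∈ l, x ∈ A}).IsPWO :=
  (Set.PartiallyWellOrderedOn.partiallyWellOrderedOn_sublistForall₂ _ hA).image_of_monotone_on
    fun _ _ _ hl₂ hsub => hsub.prod_le_prod' fun a ha => hone a (hl₂ a ha)

theorem neumann_lemma_A_general {M : Type*} [Monoid M] [LinearOrder M]
    (hmul_right : ∀ a b c : M, a < b → a * c < b * c)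
    (hmul_left : ∀ a b c : M, a < b → c * a < c * b)
    (hone : ∀ a : M, 1 ≤ a)
    (A : Set M) (hA : A.WellFoundedOn (· < ·)) :
    (¬∃ s : ℕ → List M,
        (∀ n, s n ≠ [] ∧ ∀ x ∈ s n, x ∈ A) ∧
        (∀ n, (s (n + 1)).prod < (s n).prod)) ∧
    ({t : M | ∃ l : List M, l ≠ [] ∧ (∀ x ∈ l, x ∈ A) ∧ l.prod = t}.WellFoundedOn
        (· < ·)) := by
  have : MulLeftStrictMono M := ⟨fun c _ _ h => hmul_left _ _ c h⟩
  have : MulRightStrictMono M := ⟨fun c _ _ h => hmul_right _ _ c h⟩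
  have := mulLeftMono_of_mulLeftStrictMono M
  have := mulRightMono_of_mulRightStrictMono M
  have hWF : {t : M | ∃ l : List M, l ≠ [] ∧ (∀ x ∈ l, x ∈ A) ∧ l.prod = t}.IsWF :=
    ((Set.IsWF.isPWO hA).image_list_prod fun a _ => hone a).isWF.mono
      fun _ ⟨l, _, hlA, hl⟩ => ⟨l, hlA, hl⟩
  refine ⟨fun ⟨s, hs, hdec⟩ => ?_, hWF⟩
  exact Set.isWF_iff_no_descending_seq.1 hWF (fun n => (s n).prod) (strictAnti_nat_of_succ_lt hdec)
    fun n => ⟨s n, (hs n).1, (hs n).2, rfl⟩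

/-- Lemma A: there is no sequence of nonempty finite lists with entries in `A`
whose products are strictly decreasing; equivalently, the set of all such
products is well-ordered. -/
theorem neumann_lemma_A {M : Type*} [Monoid M] [LinearOrder M]
    (hmul_right : ∀ a b c : M, a < b → a * c < b * c)
    (hmul_left : ∀ a b c : M, a < b → c * a < c * b)
    (hone : ∀ a : M, 1 ≤ a)
    (A : Set M) (hA1 : (1 : M) ∉ A) (hA : A.WellFoundedOn (· < ·)) :
    (¬∃ s : ℕ → List M,
        (∀ n, s n ≠ [] ∧ ∀ x ∈ s n, x ∈ A) ∧
        (∀ n, (s (n + 1)).prod < (s n).prod)) ∧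
    ({t : M | ∃ l : List M, l ≠ [] ∧ (∀ x ∈ l, x ∈ A) ∧ l.prod = t}.WellFoundedOn
        (· < ·)) :=
  neumann_lemma_A_general hmul_right hmul_left hone A hA
end

section
/- Let M be a monoid equipped with a linear order such that multiplication is strictly monotone on both sides and such that the identity 1 is the least element of M. Let A be a subset of M with 1 ∉ A that is well-ordered. Then for every t in M, the set of nonempty finite lists l with all entries in A and l.prod = t is finite; that is, each product has only finitely many representatives as a string over A. -/
/-!
The products of strings over `A` form a well-ordered set `P` (Higman's lemma), so one may argue
by well-founded induction on `t ∈ P`. A string `a :: l` with product `t` is determined by the pair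
`(a, l.prod)` in the multiplicative antidiagonal of `A × P` over `t`, together with `l`, whose
product is smaller than `t` because `1 < a`. The antidiagonal is finite: its first coordinates
determine the second ones, which decrease strictly as the first ones increase, so the set of
first coordinates is well-founded both for `<` and for `>`.
-/

theorem Set.finite_of_wellFoundedOn_lt_of_wellFoundedOn_gt {α : Type*} [LinearOrder α]
    {s : Set α} (hlt : s.WellFoundedOn (· < ·)) (hgt : s.WellFoundedOn (· > ·)) : s.Finite :=
  have : WellFoundedLT s := ⟨hlt⟩
  have : WellFoundedGT s := ⟨hgt⟩
  Set.finite_coe_iff.mp (Finite.of_wellFoundedLT_wellFoundedGT s)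

theorem Set.IsPWO.image_listProd {M : Type*} [Monoid M] [Preorder M] [MulLeftMono M]
    [MulRightMono M] {A : Set M} (hA : A.IsPWO) (hpos : ∀ a ∈ A, 1 ≤ a) :
    (List.prod '' {l : List M | ∀ x ∈ l, x ∈ A}).IsPWO :=
  (hA.partiallyWellOrderedOn_sublistForall₂ (· ≤ ·)).image_of_monotone_on
    fun _ _ _ hl₂ h => h.prod_le_prod' fun x hx => hpos x (hl₂ x hx)

section StrictlyOrderedMonoid

variable {M : Type*} [Monoid M] [LinearOrder M] [MulLeftStrictMono M] [MulRightStrictMono M]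

theorem Set.mulAntidiagonal_finite_of_isWF {s t : Set M} (hs : s.IsWF) (ht : t.IsWF) (a : M) :
    (Set.mulAntidiagonal s t a).Finite := by
  have := mulLeftMono_of_mulLeftStrictMono M
  set D := Set.mulAntidiagonal s t a
  have hinj : D.InjOn Prod.fst := fun x hx y hy hxy =>
    Prod.ext hxy (mul_right_strictMono.injective (hx.2.2.trans (hxy ▸ hy.2.2.symm)))
  have hanti : ∀ x ∈ D, ∀ y ∈ D, x.1 < y.1 → y.2 < x.2 := fun x hx y hy hlt =>
    lt_of_not_ge fun hle => (mul_lt_mul_of_lt_of_le hlt hle).ne (hx.2.2.trans hy.2.2.symm)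
  have hlt : (Prod.fst '' D).WellFoundedOn (· < ·) :=
    hs.mono (Set.image_subset_iff.mpr fun _ hx => hx.1)
  have hgt : (Prod.fst '' D).WellFoundedOn (· > ·) := by
    have hsnd : D.WellFoundedOn (Function.onFun (· < ·) Prod.snd) :=
      Set.wellFoundedOn_image.mp (ht.mono (Set.image_subset_iff.mpr fun _ hx => hx.2.1))
    exact Set.wellFoundedOn_image.mpr (hsnd.mono' fun x hx y hy => hanti y hy x hx)
  exact (Set.finite_of_wellFoundedOn_lt_of_wellFoundedOn_gt hlt hgt).of_finite_image hinj

theorem finite_setOf_forall_mem_and_prod_eq {A : Set M} (hA : A.IsWF) (hA1 : ∀ a ∈ A, 1 < a)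
    (t : M) : {l : List M | (∀ x ∈ l, x ∈ A) ∧ l.prod = t}.Finite := by
  have := mulLeftMono_of_mulLeftStrictMono M
  have := mulRightMono_of_mulRightStrictMono M
  set S : M → Set (List M) := fun t => {l | (∀ x ∈ l, x ∈ A) ∧ l.prod = t}
  change (S t).Finite
  set P := List.prod '' {l : List M | ∀ x ∈ l, x ∈ A}
  have hP : P.IsWF := (hA.isPWO.image_listProd fun a ha => (hA1 a ha).le).isWF
  by_cases ht : t ∈ P
  swap
  · exact Set.finite_empty.subset fun l hl => ht ⟨l, hl⟩
  refine hP.induction (P := fun t => (S t).Finite) ht fun t _ ih => ?_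
  have hstrings := (Set.mulAntidiagonal_finite_of_isWF hA hP t).biUnion fun x hx =>
    (ih x.2 hx.2.1 (hx.2.2 ▸ lt_mul_of_one_lt_left' x.2 (hA1 x.1 hx.1))).image (List.cons x.1)
  refine ((Set.finite_singleton []).union hstrings).subset ?_
  rintro (_ | ⟨a, l⟩) ⟨hl, rfl⟩
  · exact Or.inl rfl
  · have hlA : ∀ x ∈ l, x ∈ A := fun x hx => hl x (List.mem_cons_of_mem a hx)
    exact Or.inr (Set.mem_biUnion (x := (a, l.prod))
      ⟨hl a List.mem_cons_self, ⟨l, hlA, rfl⟩, List.prod_cons.symm⟩ ⟨l, ⟨hlA, rfl⟩, rfl⟩)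

end StrictlyOrderedMonoid

/-- Lemma B: each element of `M` has only finitely many representations as the
product of a nonempty finite list with entries in `A`. -/
theorem neumann_lemma_B {M : Type*} [Monoid M] [LinearOrder M]
    (hmul_right : ∀ a b c : M, a < b → a * c < b * c)
    (hmul_left : ∀ a b c : M, a < b → c * a < c * b)
    (hone : ∀ a : M, 1 ≤ a)
    (A : Set M) (hA1 : (1 : M) ∉ A) (hA : A.WellFoundedOn (· < ·)) :
    ∀ t : M, {l : List M | l ≠ [] ∧ (∀ x ∈ l, x ∈ A) ∧ l.prod = t}.Finite := by
  have : MulLeftStrictMono M := ⟨fun c _ _ h => hmul_left _ _ c h⟩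
  have : MulRightStrictMono M := ⟨fun c _ _ h => hmul_right _ _ c h⟩
  have hA1' : ∀ a ∈ A, 1 < a := fun a ha => (hone a).lt_of_ne fun h => hA1 (h ▸ ha)
  intro t
  exact (finite_setOf_forall_mem_and_prod_eq hA hA1' t).subset fun _ hl => hl.2
end
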